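/- Let v_1,…,v_q ∈ ℝⁿ be such that P := conv{v_1,…,v_q} has nonempty interior, and let V ∈ ℝ^{n×q} be the matrix with columns v_i. Then the map Φ : ℝⁿ → ℝⁿ, Φ(y) := V softmax(Vᵀy), is a homeomorphism from ℝⁿ onto int(P): Φ is continuous, injective, its image is exactly int(P), and its inverse Φ⁻¹ : int(P) → ℝⁿ is continuous. -/

import Mathlib

/-!
`Phi v` is the gradient of the convex function `F y = log ∑ i, exp ⟪v i, y⟫`. Jensen's inequality
for `exp` gives the gradient inequality `F y + ⟪Phi v y, z - y⟫ ≤ F z`, with equality only if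
`⟪v i, z - y⟫` does not depend on `i`; since `P` lies in no hyperplane, `Phi v` is injective.
`Phi v y` is a combination of the `v i` with positive weights, hence lies in `int P`. Conversely,
if `closedBall x δ ⊆ P` then `F y ≥ ⟪x, y⟫ + δ ‖y‖`, so `F y - ⟪x, y⟫` attains its minimum, at a
point `y` with `Phi v y = x`. The same estimate bounds the preimages of points near `x`, and a
continuous injection restricted to a compact set is an embedding, whence the continuity of the
inverse.
-/

open Real

/-- The softmax map `softmax(y)_i = exp(y_i) / Σ_j exp(y_j)`. -/
noncomputable def softmax {m : ℕ} (y : Fin m → ℝ) : Fin m → ℝ :=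
  fun i => Real.exp (y i) / ∑ j, Real.exp (y j)

/-- The latent-to-design map `Φ(y) = V softmax (Vᵀ y) = Σ_i softmax(Vᵀy)_i v_i`. -/
noncomputable def Phi {n q : ℕ} (v : Fin q → Fin n → ℝ) (y : Fin n → ℝ) :
    Fin n → ℝ :=
  ∑ i, softmax (fun i : Fin q => ∑ j, v i j * y j) i • v i

open Set Filter Topology Matrix

section ConvexHull

variable {ι E : Type*} [Fintype ι] [AddCommGroup E] [Module ℝ E]

lemma convexHull_range_eq_image_stdSimplex (v : ι → E) :
    convexHull ℝ (range v) = Fintype.linearCombination ℝ v '' stdSimplex ℝ ι := by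
  classical
  rw [← convexHull_rangle_single_eq_stdSimplex, LinearMap.image_convexHull, ← range_comp]
  congr 1
  ext i
  simp [Fintype.linearCombination_apply_single]

lemma sum_smul_mem_interior_convexHull [TopologicalSpace E] [IsTopologicalAddGroup E]
    [ContinuousSMul ℝ E] {v : ι → E} {w : ι → ℝ} (hw₀ : ∀ i, 0 < w i) (hw₁ : ∑ i, w i = 1)
    (hint : (interior (convexHull ℝ (range v))).Nonempty) :
    ∑ i, w i • v i ∈ interior (convexHull ℝ (range v)) := by
  obtain ⟨z, hz⟩ := hint
  have hzP := interior_subset hz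
  rw [convexHull_range_eq_image_stdSimplex] at hzP
  obtain ⟨μ, ⟨hμ₀, hμ₁⟩, rfl⟩ := hzP
  have : Nonempty ι := by
    by_contra h
    simp [not_nonempty_iff.1 h] at hw₁
  obtain ⟨i₀, hi₀⟩ := Finite.exists_min w
  -- `∑ i, w i • v i = (1 - t) • a + t • z` with `a ∈ P` as long as `t * μ i ≤ w i`
  set t := w i₀ / 2 with ht
  have ht₀ : 0 < t := half_pos (hw₀ i₀)
  have ht₁ : t < 1 := by
    have := hw₁ ▸ Finset.single_le_sum (fun i _ => (hw₀ i).le) (Finset.mem_univ i₀)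
    linarith [ht]
  set a : ι → ℝ := fun i => (w i - t * μ i) / (1 - t)
  have ha : a ∈ stdSimplex ℝ ι := by
    refine ⟨fun i => div_nonneg ?_ (by linarith), ?_⟩
    · have hμle : μ i ≤ 1 := hμ₁ ▸ Finset.single_le_sum (fun i _ => hμ₀ i) (Finset.mem_univ i)
      nlinarith [hi₀ i, hμ₀ i, ht]
    · rw [← Finset.sum_div, Finset.sum_sub_distrib, ← Finset.mul_sum, hw₁, hμ₁, mul_one,
        div_self (by linarith)]
  have hcomb : ∑ i, w i • v i =
      (1 - t) • Fintype.linearCombination ℝ v a + t • Fintype.linearCombination ℝ v μ := by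
    simp only [Fintype.linearCombination_apply, Finset.smul_sum, smul_smul,
      ← Finset.sum_add_distrib, ← add_smul, a]
    refine Finset.sum_congr rfl fun i _ => ?_
    rw [mul_div_cancel₀ _ (by linarith : (1 - t) ≠ 0)]
    ring_nf
  rw [hcomb]
  exact (convex_convexHull ℝ _).combo_self_interior_mem_interior
    ((convexHull_range_eq_image_stdSimplex v).symm ▸ mem_image_of_mem _ ha) hz
    (by linarith) ht₀ (by ring)

end ConvexHull

lemma continuousOn_of_rightInvOn {X Y : Type*} [TopologicalSpace X] [TopologicalSpace Y]
    [T2Space Y] {f : X → Y} {g : Y → X} {s : Set Y} (hf : Continuous f)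
    (hinj : Function.Injective f) (hfg : RightInvOn g f s)
    (hK : ∀ y ∈ s, ∃ K, IsCompact K ∧ ∀ᶠ y' in 𝓝 y, f ⁻¹' {y'} ⊆ K) :
    ContinuousOn g s := by
  intro y hy
  obtain ⟨K, hK, hfK⟩ := hK y hy
  refine hK.tendsto_nhds_of_unique_mapClusterPt ?_ fun x _ hx => hinj ?_
  · filter_upwards [nhdsWithin_le_nhds hfK, self_mem_nhdsWithin] with y' hy' hy's
    exact hy' (hfg hy's)
  · -- `f ∘ g` is the identity on `s`, so `f x` is a cluster point of `𝓝[s] y` itself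
    have hfx : MapClusterPt (f x) (𝓝[s] y) (f ∘ g) := hx.continuousAt_comp hf.continuousAt
    have hid : f ∘ g =ᶠ[𝓝[s] y] id := eventually_nhdsWithin_of_forall fun y' hy' => hfg hy'
    rw [hid.mapClusterPt_iff, mapClusterPt_id_iff] at hfx
    rw [hfg hy]
    exact eq_of_nhds_neBot (hfx.mono nhdsWithin_le_nhds)

section DotProduct

variable {ι κ : Type*} [Fintype ι]

lemma dotProduct_le_of_mem_convexHull {v : κ → ι → ℝ} {x u : ι → ℝ} {c : ℝ}
    (hx : x ∈ convexHull ℝ (range v)) (hv : ∀ i, v i ⬝ᵥ u ≤ c) : x ⬝ᵥ u ≤ c :=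
  convexHull_min (range_subset_iff.2 hv)
    (convex_halfSpace_le (f := (· ⬝ᵥ u))
      ⟨fun a b => add_dotProduct a b u, fun t a => smul_dotProduct t a u⟩ c) hx

lemma dotProduct_eq_of_mem_convexHull {v : κ → ι → ℝ} {x u : ι → ℝ} {c : ℝ}
    (hx : x ∈ convexHull ℝ (range v)) (hv : ∀ i, v i ⬝ᵥ u = c) : x ⬝ᵥ u = c :=
  convexHull_min (range_subset_iff.2 hv)
    (convex_hyperplane (f := (· ⬝ᵥ u))
      ⟨fun a b => add_dotProduct a b u, fun t a => smul_dotProduct t a u⟩ c) hx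

lemma eq_zero_of_dotProduct_eq_on {s : Set (ι → ℝ)} (hs : (interior s).Nonempty) {u : ι → ℝ}
    {c : ℝ} (hu : ∀ x ∈ s, x ⬝ᵥ u = c) : u = 0 := by
  obtain ⟨z, hz⟩ := hs
  have hlim : Tendsto (fun t : ℝ => z + t • u) (𝓝[>] 0) (𝓝 z) := by
    have : Continuous (fun t : ℝ => z + t • u) := by fun_prop
    exact (this.tendsto' 0 z (by simp)).mono_left nhdsWithin_le_nhds
  obtain ⟨t, hts, ht⟩ := ((hlim.eventually (mem_interior_iff_mem_nhds.1 hz)).and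
    self_mem_nhdsWithin).exists
  have h := hu _ hts
  rw [add_dotProduct, smul_dotProduct, hu z (interior_subset hz), smul_eq_mul, add_eq_left,
    mul_eq_zero] at h
  exact dotProduct_self_eq_zero.1 (h.resolve_left (ne_of_gt ht))

lemma dotProduct_add_mul_norm_le {x y : ι → ℝ} {δ c : ℝ} (hδ : 0 < δ)
    (h : ∀ x' ∈ Metric.closedBall x δ, x' ⬝ᵥ y ≤ c) : x ⬝ᵥ y + δ * ‖y‖ ≤ c := by
  classical
  have hshift : ∀ j (ε : ℝ), |ε| ≤ δ → x ⬝ᵥ y + ε * y j ≤ c := fun j ε hε => by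
    have := h (x + ε • Pi.single j 1) (by
      rw [Metric.mem_closedBall, dist_self_add_left, norm_smul, Real.norm_eq_abs]
      rwa [Pi.norm_single, norm_one, mul_one])
    rwa [add_dotProduct, smul_dotProduct, single_dotProduct, one_mul, smul_eq_mul] at this
  have hc : 0 ≤ c - x ⬝ᵥ y := by linarith [h x (Metric.mem_closedBall_self hδ.le)]
  suffices ‖y‖ ≤ (c - x ⬝ᵥ y) / δ by rw [le_div_iff₀ hδ] at this; linarith
  refine (pi_norm_le_iff_of_nonneg (div_nonneg hc hδ.le)).2 fun j => ?_
  rw [Real.norm_eq_abs, le_div_iff₀ hδ]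
  have hpos := hshift j δ (abs_of_pos hδ).le
  have hneg := hshift j (-δ) (by rw [abs_neg, abs_of_pos hδ])
  cases abs_cases (y j) <;> nlinarith

end DotProduct

lemma sum_mul_le_log_sum_mul_exp {ι : Type*} (s : Finset ι) {w p : ι → ℝ}
    (hw₀ : ∀ i ∈ s, 0 ≤ w i) (hw₁ : ∑ i ∈ s, w i = 1) :
    ∑ i ∈ s, w i * p i ≤ Real.log (∑ i ∈ s, w i * Real.exp (p i)) := by
  have h := convexOn_exp.map_sum_le hw₀ hw₁ (fun i _ => mem_univ (p i))
  simp only [smul_eq_mul] at h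
  exact (Real.le_log_iff_exp_le ((Real.exp_pos _).trans_le h)).2 h

lemma eq_of_log_sum_mul_exp_eq {ι : Type*} {s : Finset ι} {w p : ι → ℝ}
    (hw₀ : ∀ i ∈ s, 0 < w i) (hw₁ : ∑ i ∈ s, w i = 1)
    (h : Real.log (∑ i ∈ s, w i * Real.exp (p i)) = ∑ i ∈ s, w i * p i) :
    ∀ ⦃j⦄, j ∈ s → ∀ ⦃k⦄, k ∈ s → p j = p k := by
  refine strictConvexOn_exp.eq_of_le_map_sum hw₀ hw₁ (fun i _ => mem_univ (p i)) ?_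
  have hpos : 0 < ∑ i ∈ s, w i * Real.exp (p i) :=
    Finset.sum_pos (fun i hi => mul_pos (hw₀ i hi) (Real.exp_pos _))
      (Finset.nonempty_of_sum_ne_zero (hw₁ ▸ one_ne_zero))
  simp only [smul_eq_mul, ← h, Real.exp_log hpos, le_refl]

section LogSumExp

variable {m : ℕ}

noncomputable def logSumExp (a : Fin m → ℝ) : ℝ := Real.log (∑ i, Real.exp (a i))

lemma sum_exp_pos [NeZero m] (a : Fin m → ℝ) : 0 < ∑ i, Real.exp (a i) :=
  Finset.sum_pos (fun _ _ => Real.exp_pos _) Finset.univ_nonempty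

lemma softmax_pos [NeZero m] (a : Fin m → ℝ) (i : Fin m) : 0 < softmax a i :=
  div_pos (Real.exp_pos _) (sum_exp_pos a)

lemma sum_softmax [NeZero m] (a : Fin m → ℝ) : ∑ i, softmax a i = 1 := by
  simp only [softmax, ← Finset.sum_div, div_self (sum_exp_pos a).ne']

lemma continuous_softmax : Continuous (softmax (m := m)) := by
  refine continuous_pi fun i => ?_
  have : NeZero m := ⟨Fin.pos i |>.ne'⟩
  exact ((continuous_apply i).rexp).div (by fun_prop) fun a => (sum_exp_pos a).ne'

lemma continuous_logSumExp [NeZero m] : Continuous (logSumExp (m := m)) :=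
  Continuous.log (by fun_prop) fun a => (sum_exp_pos a).ne'

lemma le_logSumExp [NeZero m] (a : Fin m → ℝ) (i : Fin m) : a i ≤ logSumExp a :=
  (Real.le_log_iff_exp_le (sum_exp_pos a)).2
    (Finset.single_le_sum (fun j _ => (Real.exp_pos (a j)).le) (Finset.mem_univ i))

lemma logSumExp_eq_add_log_sum_softmax_mul_exp [NeZero m] (a b : Fin m → ℝ) :
    logSumExp b = logSumExp a + Real.log (∑ i, softmax a i * Real.exp (b i - a i)) := by
  have : ∑ i, softmax a i * Real.exp (b i - a i) =
      (∑ i, Real.exp (b i)) / ∑ i, Real.exp (a i) := by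
    rw [Finset.sum_div]
    refine Finset.sum_congr rfl fun i _ => ?_
    rw [softmax, Real.exp_sub]
    field_simp
  rw [this, Real.log_div (sum_exp_pos b).ne' (sum_exp_pos a).ne', logSumExp, logSumExp]
  ring

/-- Gibbs' inequality: `softmax a` is the gradient of the convex function `logSumExp` at `a`. -/
lemma logSumExp_add_softmax_dotProduct_le [NeZero m] (a b : Fin m → ℝ) :
    logSumExp a + softmax a ⬝ᵥ (b - a) ≤ logSumExp b := by
  rw [logSumExp_eq_add_log_sum_softmax_mul_exp a b]
  gcongr
  exact sum_mul_le_log_sum_mul_exp _ (fun i _ => (softmax_pos a i).le) (sum_softmax a)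

lemma sub_eq_sub_of_logSumExp_eq [NeZero m] {a b : Fin m → ℝ}
    (h : logSumExp b = logSumExp a + softmax a ⬝ᵥ (b - a)) (i j : Fin m) :
    b i - a i = b j - a j := by
  rw [logSumExp_eq_add_log_sum_softmax_mul_exp a b, add_right_inj] at h
  exact eq_of_log_sum_mul_exp_eq (fun i _ => softmax_pos a i) (sum_softmax a) h
    (Finset.mem_univ i) (Finset.mem_univ j)

end LogSumExp

section Phi

variable {n q : ℕ} (v : Matrix (Fin q) (Fin n) ℝ)

lemma Phi_eq_vecMul (y : Fin n → ℝ) : Phi v y = softmax (v *ᵥ y) ᵥ* v := by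
  ext j
  simp only [Phi, vecMul, dotProduct, Finset.sum_apply, Pi.smul_apply, smul_eq_mul]
  rfl

lemma continuous_Phi : Continuous (Phi v) := by
  simp only [funext (Phi_eq_vecMul v)]
  exact (continuous_softmax.comp (continuous_const.matrix_mulVec continuous_id)).matrix_vecMul
    continuous_const

lemma logSumExp_mulVec_add_le [NeZero q] (y z : Fin n → ℝ) :
    logSumExp (v *ᵥ y) + Phi v y ⬝ᵥ (z - y) ≤ logSumExp (v *ᵥ z) := by
  have := logSumExp_add_softmax_dotProduct_le (v *ᵥ y) (v *ᵥ z)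
  rwa [← mulVec_sub, dotProduct_mulVec, ← Phi_eq_vecMul] at this

lemma Phi_injective [NeZero q] (hint : (interior (convexHull ℝ (range v))).Nonempty) :
    Function.Injective (Phi v) := by
  intro y z hyz
  have hle := logSumExp_mulVec_add_le v y z
  have hge := logSumExp_mulVec_add_le v z y
  rw [← hyz, ← neg_sub, dotProduct_neg] at hge
  have heq : logSumExp (v *ᵥ z) =
      logSumExp (v *ᵥ y) + softmax (v *ᵥ y) ⬝ᵥ (v *ᵥ z - v *ᵥ y) := by
    rw [← mulVec_sub, dotProduct_mulVec, ← Phi_eq_vecMul]; linarith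
  have hconst : ∀ i, v i ⬝ᵥ (z - y) = v 0 ⬝ᵥ (z - y) := fun i => by
    have := sub_eq_sub_of_logSumExp_eq heq i 0
    rwa [← Pi.sub_apply, ← mulVec_sub, ← Pi.sub_apply, ← mulVec_sub] at this
  exact (sub_eq_zero.1 (eq_zero_of_dotProduct_eq_on hint
    fun x hx => dotProduct_eq_of_mem_convexHull hx hconst)).symm

lemma Phi_mem_interior [NeZero q] (hint : (interior (convexHull ℝ (range v))).Nonempty)
    (y : Fin n → ℝ) : Phi v y ∈ interior (convexHull ℝ (range v)) :=
  sum_smul_mem_interior_convexHull (softmax_pos _) (sum_softmax _) hint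

lemma Phi_eq_iff_forall_le [NeZero q] {x y : Fin n → ℝ} :
    Phi v y = x ↔ ∀ z, logSumExp (v *ᵥ y) - x ⬝ᵥ y ≤ logSumExp (v *ᵥ z) - x ⬝ᵥ z := by
  constructor
  · rintro rfl z
    have := logSumExp_mulVec_add_le v y z
    rw [dotProduct_sub] at this
    linarith
  · intro hmin
    -- first-order optimality without derivatives: gradient inequality at `y + t • u`, `t → 0⁺`
    have hle : ∀ u, x ⬝ᵥ u ≤ Phi v y ⬝ᵥ u := by
      intro u
      have hdir : ∀ t ∈ Ioi (0 : ℝ), x ⬝ᵥ u ≤ Phi v (y + t • u) ⬝ᵥ u := by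
        intro t ht
        have h₁ := hmin (y + t • u)
        have h₂ := logSumExp_mulVec_add_le v (y + t • u) y
        rw [sub_add_cancel_left, dotProduct_neg, dotProduct_smul, smul_eq_mul] at h₂
        rw [dotProduct_add, dotProduct_smul, smul_eq_mul] at h₁
        exact le_of_mul_le_mul_left (by linarith) ht
      have hlim : Tendsto (fun t : ℝ => Phi v (y + t • u) ⬝ᵥ u) (𝓝[>] 0)
          (𝓝 (Phi v y ⬝ᵥ u)) := by
        have : Continuous (fun t : ℝ => Phi v (y + t • u) ⬝ᵥ u) :=
          ((continuous_Phi v).comp (by fun_prop)).dotProduct continuous_const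
        exact (this.tendsto' 0 _ (by simp)).mono_left nhdsWithin_le_nhds
      exact ge_of_tendsto hlim (eventually_nhdsWithin_of_forall hdir)
    have h : ∀ u, (Phi v y - x) ⬝ᵥ u = 0 := fun u => by
      have := hle (-u)
      rw [dotProduct_neg, dotProduct_neg, neg_le_neg_iff] at this
      rw [sub_dotProduct]
      linarith [hle u]
    exact sub_eq_zero.1 (dotProduct_self_eq_zero.1 (h _))

lemma dotProduct_add_mul_norm_le_logSumExp [NeZero q] {x : Fin n → ℝ} {δ : ℝ} (hδ : 0 < δ)
    (hx : Metric.closedBall x δ ⊆ convexHull ℝ (range v)) (y : Fin n → ℝ) :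
    x ⬝ᵥ y + δ * ‖y‖ ≤ logSumExp (v *ᵥ y) :=
  dotProduct_add_mul_norm_le hδ fun _ hx' =>
    dotProduct_le_of_mem_convexHull (hx hx') (le_logSumExp (v *ᵥ y))

lemma mem_range_Phi [NeZero q] {x : Fin n → ℝ} (hx : x ∈ interior (convexHull ℝ (range v))) :
    x ∈ range (Phi v) := by
  obtain ⟨δ, hδ, hball⟩ :=
    Metric.nhds_basis_closedBall.mem_iff.1 (mem_interior_iff_mem_nhds.1 hx)
  have hcoer : Tendsto (fun y => logSumExp (v *ᵥ y) - x ⬝ᵥ y) (cocompact _) atTop := by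
    refine tendsto_atTop_mono (fun y => ?_) (tendsto_norm_cocompact_atTop.const_mul_atTop hδ)
    linarith [dotProduct_add_mul_norm_le_logSumExp v hδ hball y]
  have hcont : Continuous (fun y => logSumExp (v *ᵥ y) - x ⬝ᵥ y) :=
    (continuous_logSumExp.comp (continuous_const.matrix_mulVec continuous_id)).sub
      (continuous_const.dotProduct continuous_id)
  obtain ⟨y, hy⟩ := hcont.exists_forall_le hcoer
  exact ⟨y, (Phi_eq_iff_forall_le v).2 hy⟩

lemma norm_le_of_Phi_eq [NeZero q] {x y : Fin n → ℝ} {δ : ℝ} (hδ : 0 < δ)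
    (hx : Metric.closedBall x δ ⊆ convexHull ℝ (range v)) (hy : Phi v y = x) :
    ‖y‖ ≤ logSumExp (v *ᵥ 0) / δ := by
  have h₀ := (Phi_eq_iff_forall_le v).1 hy 0
  rw [dotProduct_zero, sub_zero] at h₀
  rw [le_div_iff₀ hδ]
  linarith [dotProduct_add_mul_norm_le_logSumExp v hδ hx y]

lemma exists_isCompact_preimage_Phi_subset [NeZero q] {x : Fin n → ℝ}
    (hx : x ∈ interior (convexHull ℝ (range v))) :
    ∃ K, IsCompact K ∧ ∀ᶠ x' in 𝓝 x, Phi v ⁻¹' {x'} ⊆ K := by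
  obtain ⟨ε, hε, hball⟩ := Metric.mem_nhds_iff.1 (mem_interior_iff_mem_nhds.1 hx)
  refine ⟨Metric.closedBall 0 (logSumExp (v *ᵥ 0) / (ε / 2)), isCompact_closedBall _ _, ?_⟩
  filter_upwards [Metric.ball_mem_nhds x (half_pos hε)] with _ hx' y hy
  rw [mem_closedBall_zero_iff]
  refine norm_le_of_Phi_eq v (half_pos hε) ((Metric.closedBall_subset_ball' ?_).trans hball) hy
  linarith [Metric.mem_ball.1 hx']

end Phi

/-- Let `v_1, …, v_q ∈ ℝⁿ` be such that `P = conv {v_1, …, v_q}` has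
nonempty interior.  Then `Φ(y) = V softmax (Vᵀ y)` is a homeomorphism from `ℝⁿ`
onto `int P`: it is continuous, injective, its range is exactly `int P`, and it
has a continuous inverse on `int P`. -/
theorem softmax_param_homeomorphism {n q : ℕ} (v : Fin q → Fin n → ℝ)
    (hint : (interior (convexHull ℝ (Set.range v))).Nonempty) :
    Continuous (Phi v) ∧
    Function.Injective (Phi v) ∧
    Set.range (Phi v) = interior (convexHull ℝ (Set.range v)) ∧
    ∃ g : (Fin n → ℝ) → (Fin n → ℝ),
      ContinuousOn g (interior (convexHull ℝ (Set.range v))) ∧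
      (∀ y, g (Phi v y) = y) ∧
      ∀ x ∈ interior (convexHull ℝ (Set.range v)), Phi v (g x) = x := by
  have : NeZero q := ⟨by rintro rfl; simp at hint⟩
  have hinj := Phi_injective v hint
  have hrange : range (Phi v) = interior (convexHull ℝ (range v)) :=
    (range_subset_iff.2 (Phi_mem_interior v hint)).antisymm fun x hx => mem_range_Phi v hx
  have hinv : RightInvOn (Function.invFun (Phi v)) (Phi v) (interior (convexHull ℝ (range v))) :=
    fun x hx => Function.invFun_eq (hrange.symm ▸ hx : x ∈ range (Phi v))
  refine ⟨continuous_Phi v, hinj, hrange, Function.invFun (Phi v), ?_,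
    Function.leftInverse_invFun hinj, hinv⟩
  exact continuousOn_of_rightInvOn (continuous_Phi v) hinj hinv
    fun x hx => exists_isCompact_preimage_Phi_subset v hx
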